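/- arXiv:math/0411539 — 2 statements merged into one kernel-verified Lean document; each statement's English description precedes it below -/
import Mathlib

section
/- For every real H with 0 < H < 1, the integral over (0,∞) of λ^{-2H-1} sin²(aλ/2) dλ equals π a^{2H} / (4 Γ(2H+1) sin(πH)) for every a > 0. -/
/-!
Writing `Γ(2H+1) x^(-2H-1) = ∫₀^∞ t^(2H) e^(-xt) dt` and exchanging the order of integration
(the integrand is nonnegative), the Laplace transform
`∫₀^∞ e^(-tx) sin²(ax/2) dx = a² / (2t(t² + a²))` turns the integral into
`(a²/2) ∫₀^∞ t^(2H-1) / (t² + a²) dt`. After `x = t²` this is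
`∫₀^∞ x^(s-1) / (x + b) dx = Γ(s) Γ(1-s) b^(s-1) = π b^(s-1) / sin(πs)`, obtained by a second
exchange from `1 / (x + b) = ∫₀^∞ e^(-(x+b)u) du`.
-/

open Real MeasureTheory Set

section Fubini

variable {α β : Type*} [MeasurableSpace α] [MeasurableSpace β] {μ : Measure α} {ν : Measure β}
  [SFinite μ] [SFinite ν]

theorem integral_integral_swap_of_nonneg {f : α → β → ℝ}
    (hf : AEStronglyMeasurable (Function.uncurry f) (μ.prod ν))
    (hf_nonneg : ∀ᵐ x ∂μ, 0 ≤ᵐ[ν] f x) (hf_int : ∀ᵐ x ∂μ, Integrable (f x) ν)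
    (h_int : Integrable (fun x ↦ ∫ y, f x y ∂ν) μ) :
    ∫ x, ∫ y, f x y ∂ν ∂μ = ∫ y, ∫ x, f x y ∂μ ∂ν := by
  refine integral_integral_swap ((integrable_prod_iff hf).2 ⟨hf_int, h_int.congr ?_⟩)
  filter_upwards [hf_nonneg] with x hx
  exact integral_congr_ae (hx.mono fun y hy ↦ (Real.norm_of_nonneg hy).symm)

end Fubini

theorem integrableOn_rpow_sub_one_mul_exp_neg_mul {a r : ℝ} (ha : 0 < a) (hr : 0 < r) :
    IntegrableOn (fun t : ℝ ↦ t ^ (a - 1) * exp (-(r * t))) (Ioi 0) := by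
  simpa [neg_mul] using
    integrableOn_rpow_mul_exp_neg_mul_rpow (p := 1) (s := a - 1) (by linarith) one_pos hr

theorem integral_exp_neg_mul_Ioi {r : ℝ} (hr : 0 < r) : ∫ x in Ioi 0, exp (-(r * x)) = 1 / r := by
  simpa [neg_mul] using integral_exp_mul_Ioi (neg_lt_zero.2 hr) 0

theorem exp_neg_mul_mul_cos_eq_re (t a x : ℝ) :
    exp (-(t * x)) * cos (a * x) = (Complex.exp ((-t + a * Complex.I) * x)).re := by
  simp [Complex.exp_re]

theorem integrableOn_exp_neg_mul_mul_cos {t : ℝ} (ht : 0 < t) (a : ℝ) :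
    IntegrableOn (fun x ↦ exp (-(t * x)) * cos (a * x)) (Ioi 0) := by
  simp_rw [exp_neg_mul_mul_cos_eq_re]
  exact (integrableOn_exp_mul_complex_Ioi (by simpa using ht) 0).re

theorem integral_exp_neg_mul_mul_cos {t : ℝ} (ht : 0 < t) (a : ℝ) :
    ∫ x in Ioi 0, exp (-(t * x)) * cos (a * x) = t / (t ^ 2 + a ^ 2) := by
  have hc : (-t + a * Complex.I).re < 0 := by simpa using ht
  simp_rw [exp_neg_mul_mul_cos_eq_re, ← RCLike.re_to_complex]
  rw [integral_re (integrableOn_exp_mul_complex_Ioi hc 0), integral_exp_mul_complex_Ioi hc 0]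
  simp [Complex.div_re, Complex.normSq, field]

theorem integral_exp_neg_mul_mul_sin_sq {t : ℝ} (ht : 0 < t) (a : ℝ) :
    ∫ x in Ioi 0, exp (-(t * x)) * sin (a * x / 2) ^ 2 = a ^ 2 / (2 * t * (t ^ 2 + a ^ 2)) := by
  have hsq : ∀ x, exp (-(t * x)) * sin (a * x / 2) ^ 2
      = (exp (-(t * x)) - exp (-(t * x)) * cos (a * x)) / 2 := by
    intro x
    rw [sin_sq_eq_half_sub, mul_div_cancel₀ _ two_ne_zero]
    ring
  have hexp : IntegrableOn (fun x ↦ exp (-(t * x))) (Ioi 0) := by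
    simpa [neg_mul] using integrableOn_exp_mul_Ioi (neg_lt_zero.2 ht) 0
  simp_rw [hsq]
  rw [integral_div, integral_sub hexp (integrableOn_exp_neg_mul_mul_cos ht a),
    integral_exp_neg_mul_mul_cos ht a, integral_exp_neg_mul_Ioi ht]
  field_simp
  ring

theorem integral_rpow_sub_one_div_add {s b : ℝ} (hs0 : 0 < s) (hs1 : s < 1) (hb : 0 < b) :
    ∫ x in Ioi 0, x ^ (s - 1) / (x + b) = π * b ^ (s - 1) / sin (π * s) := by
  set F : ℝ → ℝ → ℝ := fun u x ↦ x ^ (s - 1) * exp (-((x + b) * u))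
  have hF : ∀ u x, F u x = exp (-(b * u)) * (x ^ (s - 1) * exp (-(u * x))) := fun u x ↦ by
    simp only [F]; rw [mul_left_comm, ← exp_add]; congr 2; ring
  have hF_x : ∀ u ∈ Ioi (0 : ℝ),
      ∫ x in Ioi 0, F u x = Gamma s * (u ^ ((1 - s) - 1) * exp (-(b * u))) := by
    intro u hu
    simp_rw [hF]
    rw [integral_const_mul, integral_rpow_mul_exp_neg_mul_Ioi hs0 hu, one_div, inv_rpow hu.le,
      ← rpow_neg hu.le]
    ring_nf
  have hF_u : ∀ x ∈ Ioi (0 : ℝ), ∫ u in Ioi 0, F u x = x ^ (s - 1) / (x + b) := by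
    intro x hx
    rw [integral_const_mul, integral_exp_neg_mul_Ioi (by linarith [mem_Ioi.1 hx])]
    field_simp
  have hswap := integral_integral_swap_of_nonneg (μ := volume.restrict (Ioi 0))
    (ν := volume.restrict (Ioi 0)) (f := F) ?_ ?_ ?_ ?_
  · rw [← setIntegral_congr_fun measurableSet_Ioi hF_u, ← hswap,
      setIntegral_congr_fun measurableSet_Ioi hF_x, integral_const_mul,
      integral_rpow_mul_exp_neg_mul_Ioi (by linarith) hb, mul_left_comm, Gamma_mul_Gamma_one_sub,
      one_div, inv_rpow hb.le, ← rpow_neg hb.le, neg_sub]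
    ring
  · fun_prop
  · filter_upwards [ae_restrict_mem measurableSet_Ioi] with u hu
    filter_upwards [ae_restrict_mem measurableSet_Ioi] with x hx
    exact mul_nonneg (rpow_nonneg (le_of_lt hx) _) (exp_pos _).le
  · filter_upwards [ae_restrict_mem measurableSet_Ioi] with u hu
    exact IntegrableOn.congr_fun ((integrableOn_rpow_sub_one_mul_exp_neg_mul hs0 hu).const_mul _)
      (fun x _ ↦ (hF u x).symm) measurableSet_Ioi
  · exact IntegrableOn.congr_fun
      ((integrableOn_rpow_sub_one_mul_exp_neg_mul (by linarith) hb).const_mul (Gamma s))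
      (fun u hu ↦ (hF_x u hu).symm) measurableSet_Ioi

theorem integral_rpow_div_sq_add {s b : ℝ} (hs0 : 0 < s) (hs1 : s < 1) (hb : 0 < b) :
    ∫ t in Ioi 0, t ^ (2 * s - 1) / (t ^ 2 + b) = π * b ^ (s - 1) / (2 * sin (π * s)) := by
  have h := integral_comp_rpow_Ioi_of_pos (g := fun x ↦ x ^ (s - 1) / (x + b)) two_pos
  rw [integral_rpow_sub_one_div_add hs0 hs1 hb] at h
  rw [div_mul_eq_div_div_swap, ← h, ← integral_div]
  refine setIntegral_congr_fun measurableSet_Ioi fun t ht ↦ ?_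
  have ht' : t ^ ((2 : ℝ) - 1) * t ^ (2 * (s - 1)) = t ^ (2 * s - 1) := by
    rw [← rpow_add ht]; ring_nf
  rw [smul_eq_mul, ← rpow_mul ht.le, rpow_two, ← ht']
  ring

theorem integrableOn_rpow_mul_sin_sq {H : ℝ} (hH0 : 0 < H) (hH1 : H < 1) (a : ℝ) :
    IntegrableOn (fun x : ℝ ↦ x ^ (-2 * H - 1) * sin (a * x / 2) ^ 2) (Ioi 0) := by
  have hmeas : AEStronglyMeasurable (fun x : ℝ ↦ x ^ (-2 * H - 1) * sin (a * x / 2) ^ 2) :=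
    by fun_prop
  rw [← Ioc_union_Ioi_eq_Ioi zero_le_one, integrableOn_union]
  constructor
  · have hint : IntegrableOn (fun x : ℝ ↦ (a / 2) ^ 2 * x ^ (1 - 2 * H)) (Ioc 0 1) :=
      ((intervalIntegral.intervalIntegrable_rpow' (by linarith)).1).const_mul _
    refine hint.mono' hmeas.restrict ?_
    filter_upwards [ae_restrict_mem measurableSet_Ioc] with x hx
    have hx0 : 0 < x := hx.1
    rw [norm_of_nonneg (by positivity)]
    calc x ^ (-2 * H - 1) * sin (a * x / 2) ^ 2 ≤ x ^ (-2 * H - 1) * (a * x / 2) ^ 2 :=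
          mul_le_mul_of_nonneg_left sin_sq_le_sq (by positivity)
      _ = (a / 2) ^ 2 * x ^ (1 - 2 * H) := by
          rw [show 1 - 2 * H = -2 * H - 1 + 2 by ring, rpow_add hx0, rpow_two]; ring
  · refine (integrableOn_Ioi_rpow_of_lt (a := -2 * H - 1) (by linarith) zero_lt_one).mono'
      hmeas.restrict ?_
    filter_upwards [ae_restrict_mem measurableSet_Ioi] with x hx
    have hx0 : 0 < x := zero_lt_one.trans hx
    rw [norm_of_nonneg (by positivity)]
    exact mul_le_of_le_one_right (by positivity) (sin_sq_le_one _)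

theorem Gamma_mul_integral_rpow_mul_sin_sq {H : ℝ} (hH0 : 0 < H) (hH1 : H < 1) (a : ℝ) :
    Gamma (2 * H + 1) * ∫ x in Ioi 0, x ^ (-2 * H - 1) * sin (a * x / 2) ^ 2
      = a ^ 2 / 2 * ∫ t in Ioi 0, t ^ (2 * H - 1) / (t ^ 2 + a ^ 2) := by
  set F : ℝ → ℝ → ℝ := fun x t ↦ sin (a * x / 2) ^ 2 * (t ^ (2 * H + 1 - 1) * exp (-(x * t)))
  have hF_t : ∀ x ∈ Ioi (0 : ℝ),
      ∫ t in Ioi 0, F x t = Gamma (2 * H + 1) * (x ^ (-2 * H - 1) * sin (a * x / 2) ^ 2) := by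
    intro x hx
    rw [integral_const_mul, integral_rpow_mul_exp_neg_mul_Ioi (by linarith) hx, one_div,
      inv_rpow (le_of_lt hx), ← rpow_neg (le_of_lt hx)]
    ring_nf
  have hF_x : ∀ t ∈ Ioi (0 : ℝ),
      ∫ x in Ioi 0, F x t = a ^ 2 / 2 * (t ^ (2 * H - 1) / (t ^ 2 + a ^ 2)) := by
    intro t ht
    have hF : ∀ x, F x t = t ^ (2 * H) * (exp (-(t * x)) * sin (a * x / 2) ^ 2) := fun x ↦ by
      simp only [F, add_sub_cancel_right, mul_comm x t]; ring
    simp only [hF]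
    rw [integral_const_mul, integral_exp_neg_mul_mul_sin_sq ht, rpow_sub_one ht.ne']
    field_simp
  rw [← integral_const_mul, ← setIntegral_congr_fun measurableSet_Ioi hF_t,
    integral_integral_swap_of_nonneg, ← integral_const_mul]
  · exact setIntegral_congr_fun measurableSet_Ioi hF_x
  · fun_prop
  · filter_upwards [ae_restrict_mem measurableSet_Ioi] with x hx
    filter_upwards [ae_restrict_mem measurableSet_Ioi] with t ht
    exact mul_nonneg (sq_nonneg _) (mul_nonneg (rpow_nonneg (le_of_lt ht) _) (exp_pos _).le)
  · filter_upwards [ae_restrict_mem measurableSet_Ioi] with x hx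
    exact (integrableOn_rpow_sub_one_mul_exp_neg_mul (by linarith) hx).const_mul _
  · exact IntegrableOn.congr_fun ((integrableOn_rpow_mul_sin_sq hH0 hH1 a).const_mul _)
      (fun x hx ↦ (hF_t x hx).symm) measurableSet_Ioi

/-- For `0 < H < 1` and `a > 0`,
`∫₀^∞ λ^{-2H-1} sin²(aλ/2) dλ = π a^{2H} / (4 Γ(2H+1) sin(πH))`. -/
theorem integral_rpow_sin_sq (H a : ℝ) (hH0 : 0 < H) (hH1 : H < 1) (ha : 0 < a) :
    ∫ l in Set.Ioi (0 : ℝ), l ^ (-2 * H - 1) * Real.sin (a * l / 2) ^ 2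
      = π * a ^ (2 * H) / (4 * Real.Gamma (2 * H + 1) * Real.sin (π * H)) := by
  have hΓ : 0 < Gamma (2 * H + 1) := Gamma_pos_of_pos (by linarith)
  have hsin : 0 < sin (π * H) := sin_pos_of_pos_of_lt_pi (by positivity) (by nlinarith [pi_pos])
  have hpow : a ^ 2 * (a ^ 2) ^ (H - 1) = a ^ (2 * H) := by
    rw [← rpow_natCast, ← rpow_mul ha.le, ← rpow_add ha]; push_cast; ring_nf
  have h : Gamma (2 * H + 1) * (∫ x in Ioi 0, x ^ (-2 * H - 1) * sin (a * x / 2) ^ 2)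
      * (4 * sin (π * H)) = π * a ^ (2 * H) := by
    rw [Gamma_mul_integral_rpow_mul_sin_sq hH0 hH1,
      integral_rpow_div_sq_add hH0 hH1 (by positivity), ← hpow]
    field_simp
    norm_num
  rw [eq_div_iff (by positivity), ← h]
  ring
end

section
/- For 0 < H < 1, N ≥ 2 an integer, and x ∈ ℝ^N with x ≠ 0, the integral c²_{HN} ∫_{ℝ^N} (1 - cos⟨p,x⟩) ‖p‖^{-N-2H} dp equals (1/2)‖x‖^{2H}, where c²_{HN} = 2^{2H-1} Γ(H+N/2) Γ(H+1) sin(πH) / π^{(N+2)/2}. -/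
/-!
Write `s = H + N/2`. Subordination, `Γ(s) ‖p‖^(-2s) = ∫₀^∞ t^(s-1) e^(-t‖p‖²) dt`, turns
the integral into a double integral of a nonnegative function. Integrating first in `p`
gives a Gaussian minus its Fourier transform, `(π/t)^(N/2) (1 - e^(-‖x‖²/4t))`. The
substitution `t = ‖x‖² / 4u` brings the remaining `t`-integral to
`∫₀^∞ (1 - e^(-u)) u^(-H-1) du`, which an integration by parts evaluates as `Γ(1-H)/H`.
The constant then collapses by the reflection formula `Γ(H) Γ(1-H) = π / sin(πH)`.
-/
open Real MeasureTheory Set Filter Module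
open scoped Topology RealInnerProductSpace

section OneDim

variable {H : ℝ}

lemma one_sub_exp_neg_nonneg {u : ℝ} (hu : 0 ≤ u) : 0 ≤ 1 - exp (-u) :=
  sub_nonneg.2 (exp_le_one_iff.2 (neg_nonpos.2 hu))

lemma integrableOn_one_sub_exp_neg_mul_rpow (hH0 : 0 < H) (hH1 : H < 1) :
    IntegrableOn (fun u : ℝ => (1 - exp (-u)) * u ^ (-H - 1)) (Ioi 0) := by
  have hmeas : AEStronglyMeasurable (fun u : ℝ => (1 - exp (-u)) * u ^ (-H - 1))
      (volume.restrict (Ioi 0)) := by fun_prop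
  rw [← Ioc_union_Ioi_eq_Ioi zero_le_one]
  refine IntegrableOn.union ?_ ?_
  · have hdom : IntegrableOn (fun u : ℝ => u ^ (-H)) (Ioc 0 1) :=
      (intervalIntegrable_iff_integrableOn_Ioc_of_le zero_le_one).1
        (intervalIntegral.intervalIntegrable_rpow' (by linarith))
    refine hdom.mono' (hmeas.mono_measure (Measure.restrict_mono Ioc_subset_Ioi_self le_rfl))
      (ae_restrict_of_forall_mem measurableSet_Ioc fun u hu => ?_)
    have hu : 0 < u := hu.1
    rw [norm_of_nonneg (mul_nonneg (one_sub_exp_neg_nonneg hu.le) (by positivity))]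
    calc (1 - exp (-u)) * u ^ (-H - 1) ≤ u * u ^ (-H - 1) := by
          gcongr; linarith [one_sub_le_exp_neg u]
      _ = u ^ (-H) := by rw [mul_comm, ← rpow_add_one hu.ne']; ring_nf
  · refine (integrableOn_Ioi_rpow_of_lt (a := -H - 1) (by linarith) one_pos).mono'
      (hmeas.mono_measure (Measure.restrict_mono (Ioi_subset_Ioi zero_le_one) le_rfl))
      (ae_restrict_of_forall_mem measurableSet_Ioi fun u (hu : 1 < u) => ?_)
    have hu0 : 0 < u := one_pos.trans hu
    rw [norm_of_nonneg (mul_nonneg (one_sub_exp_neg_nonneg hu0.le) (by positivity))]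
    exact mul_le_of_le_one_left (by positivity) (by linarith [exp_pos (-u)])

lemma integral_one_sub_exp_neg_mul_rpow (hH0 : 0 < H) (hH1 : H < 1) :
    ∫ u in Ioi (0 : ℝ), (1 - exp (-u)) * u ^ (-H - 1) = Gamma (1 - H) / H := by
  have hGamma : IntegrableOn (fun u : ℝ => exp (-u) * (u ^ (-H) / -H)) (Ioi 0) := by
    have := (GammaIntegral_convergent (s := 1 - H) (by linarith)).div_const (-H)
    refine IntegrableOn.congr_fun this (fun u _ => ?_) measurableSet_Ioi
    rw [show 1 - H - 1 = -H by ring, mul_div_assoc]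
  have hparts := integral_Ioi_mul_deriv_eq_deriv_mul (a := 0) (a' := 0) (b' := 0)
    (u := fun u : ℝ => 1 - exp (-u)) (v := fun u : ℝ => u ^ (-H) / -H)
    (fun u _ => by simpa using ((hasDerivAt_neg u).exp).const_sub 1)
    (fun u (hu : 0 < u) => by
      convert (hasDerivAt_rpow_const (p := -H) (Or.inl hu.ne')).div_const (-H) using 1
      field_simp)
    (integrableOn_one_sub_exp_neg_mul_rpow hH0 hH1) hGamma ?_ ?_
  · rw [hparts, sub_self, zero_sub, ← integral_neg, Gamma_eq_integral (by linarith),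
      ← integral_div]
    refine setIntegral_congr_fun measurableSet_Ioi fun u _ => ?_
    rw [show 1 - H - 1 = -H by ring]
    field_simp
  · have hdom : Tendsto (fun u : ℝ => u ^ (1 - H) / H) (𝓝[>] 0) (𝓝 0) := by
      have hcont : ContinuousAt (fun u : ℝ => u ^ (1 - H) / H) 0 :=
        (continuousAt_rpow_const 0 (1 - H) (Or.inr (by linarith))).div_const H
      simpa [zero_rpow (by linarith : 1 - H ≠ 0)] using tendsto_nhdsWithin_of_tendsto_nhds hcont
    refine squeeze_zero_norm' ?_ hdom
    filter_upwards [self_mem_nhdsWithin] with u (hu : 0 < u)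
    rw [Pi.mul_apply, norm_mul, norm_div, norm_neg, norm_of_nonneg (one_sub_exp_neg_nonneg hu.le),
      norm_of_nonneg (by positivity), norm_of_nonneg hH0.le, ← mul_div_assoc]
    gcongr
    calc (1 - exp (-u)) * u ^ (-H) ≤ u * u ^ (-H) := by gcongr; linarith [one_sub_le_exp_neg u]
      _ = u ^ (1 - H) := by rw [mul_comm, ← rpow_add_one hu.ne']; ring_nf
  · simpa [Pi.mul_def] using (tendsto_exp_neg_atTop_nhds_zero.const_sub 1).mul
      ((tendsto_rpow_neg_atTop hH0).div_const (-H))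

-- Substituting `t = u⁻¹` turns the integrand `(1 - e^(-c/t)) t^(H-1)` into a dilate of
-- `(1 - e^(-u)) u^(-H-1)`.
lemma one_sub_exp_neg_div_mul_rpow_comp_inv {c u : ℝ} (hc : 0 < c) (hu : 0 < u) :
    u ^ (-1 - 1 : ℝ) * ((1 - exp (-(c / u ^ (-1 : ℝ)))) * (u ^ (-1 : ℝ)) ^ (H - 1)) =
      c ^ (H + 1) * ((1 - exp (-(c * u))) * (c * u) ^ (-H - 1)) := by
  rw [rpow_neg_one, div_inv_eq_mul, mul_rpow hc.le hu.le, inv_rpow hu.le, ← rpow_neg hu.le]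
  have hcH : c ^ (H + 1) * c ^ (-H - 1) = 1 := by
    rw [← rpow_add hc]; simp
  have huH : u ^ (-1 - 1 : ℝ) * u ^ (-(H - 1)) = u ^ (-H - 1) := by
    rw [← rpow_add hu]; ring_nf
  linear_combination (1 - exp (-(c * u))) * (huH - u ^ (-H - 1) * hcH)

lemma integrableOn_one_sub_exp_neg_div_mul_rpow (hH0 : 0 < H) (hH1 : H < 1) {c : ℝ} (hc : 0 < c) :
    IntegrableOn (fun t : ℝ => (1 - exp (-(c / t))) * t ^ (H - 1)) (Ioi 0) := by
  rw [← integrableOn_Ioi_comp_rpow_iff' _ (by norm_num : (-1 : ℝ) ≠ 0)]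
  have hscaled := (integrableOn_Ioi_comp_mul_left_iff _ 0 hc).2
    (by simpa using integrableOn_one_sub_exp_neg_mul_rpow hH0 hH1)
  refine IntegrableOn.congr_fun (hscaled.const_mul (c ^ (H + 1))) (fun u (hu : 0 < u) => ?_)
    measurableSet_Ioi
  simp only [smul_eq_mul]
  exact (one_sub_exp_neg_div_mul_rpow_comp_inv hc hu).symm

lemma integral_one_sub_exp_neg_div_mul_rpow (hH0 : 0 < H) (hH1 : H < 1) {c : ℝ} (hc : 0 < c) :
    ∫ t in Ioi (0 : ℝ), (1 - exp (-(c / t))) * t ^ (H - 1) = c ^ H * (Gamma (1 - H) / H) := by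
  rw [← integral_comp_rpow_Ioi _ (by norm_num : (-1 : ℝ) ≠ 0)]
  have hscaled := integral_comp_mul_left_Ioi (fun u => (1 - exp (-u)) * u ^ (-H - 1)) 0 hc
  rw [mul_zero, integral_one_sub_exp_neg_mul_rpow hH0 hH1, smul_eq_mul] at hscaled
  calc _ = ∫ u in Ioi (0 : ℝ), c ^ (H + 1) * ((1 - exp (-(c * u))) * (c * u) ^ (-H - 1)) := by
        refine setIntegral_congr_fun measurableSet_Ioi fun u (hu : 0 < u) => ?_
        rw [smul_eq_mul, abs_neg, abs_one, one_mul]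
        exact one_sub_exp_neg_div_mul_rpow_comp_inv hc hu
    _ = c ^ H * (Gamma (1 - H) / H) := by
        rw [integral_const_mul, hscaled, ← mul_assoc, rpow_add hc, rpow_one,
          mul_assoc (c ^ H), mul_inv_cancel₀ hc.ne', mul_one]

lemma integral_rpow_mul_exp_neg_sq_mul_Ioi {s a : ℝ} (hs : 0 < s) (ha : 0 < a) :
    ∫ t in Ioi (0 : ℝ), t ^ (s - 1) * exp (-(a ^ 2 * t)) = a ^ (-2 * s) * Gamma s := by
  rw [integral_rpow_mul_exp_neg_mul_Ioi hs (by positivity), one_div, ← rpow_natCast,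
    ← rpow_neg ha.le, ← rpow_mul ha.le]
  norm_num

end OneDim

section Gaussian

variable {V : Type*} [NormedAddCommGroup V] [InnerProductSpace ℝ V]

lemma one_sub_cos_inner_mul_exp_eq_re (t : ℝ) (x p : V) :
    (1 - cos ⟪p, x⟫) * exp (-(‖p‖ ^ 2 * t)) =
      (Complex.exp (-t * ‖p‖ ^ 2 + 0 * ⟪x, p⟫) -
        Complex.exp (-t * ‖p‖ ^ 2 + Complex.I * ⟪x, p⟫)).re := by
  simp [Complex.exp_re, ← Complex.ofReal_pow, real_inner_comm, mul_comm t]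
  ring

variable [FiniteDimensional ℝ V] [MeasurableSpace V] [BorelSpace V]

lemma integrable_one_sub_cos_inner_mul_exp_neg_sq_norm_mul {t : ℝ} (ht : 0 < t) (x : V) :
    Integrable fun p : V => (1 - cos ⟪p, x⟫) * exp (-(‖p‖ ^ 2 * t)) := by
  have ht' : 0 < (t : ℂ).re := by simpa using ht
  simp_rw [one_sub_cos_inner_mul_exp_eq_re]
  exact ((GaussianFourier.integrable_cexp_neg_mul_sq_norm_add ht' 0 x).sub
    (GaussianFourier.integrable_cexp_neg_mul_sq_norm_add ht' Complex.I x)).re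

lemma integral_one_sub_cos_inner_mul_exp_neg_sq_norm_mul {t : ℝ} (ht : 0 < t) (x : V) :
    ∫ p : V, (1 - cos ⟪p, x⟫) * exp (-(‖p‖ ^ 2 * t)) =
      (π / t) ^ ((finrank ℝ V : ℝ) / 2) * (1 - exp (-(‖x‖ ^ 2 / 4 / t))) := by
  have ht' : 0 < (t : ℂ).re := by simpa using ht
  have h0 := GaussianFourier.integrable_cexp_neg_mul_sq_norm_add ht' 0 x
  have hI := GaussianFourier.integrable_cexp_neg_mul_sq_norm_add ht' Complex.I x
  simp_rw [one_sub_cos_inner_mul_exp_eq_re]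
  have hre := integral_re (h0.sub hI)
  simp only [Pi.sub_apply, RCLike.re_to_complex] at hre
  rw [hre, integral_sub h0 hI,
    GaussianFourier.integral_cexp_neg_mul_sq_norm_add ht',
    GaussianFourier.integral_cexp_neg_mul_sq_norm_add ht']
  have hpow : ((π : ℂ) / t) ^ ((finrank ℝ V : ℂ) / 2) =
      (((π / t) ^ ((finrank ℝ V : ℝ) / 2) : ℝ) : ℂ) := by
    rw [Complex.ofReal_cpow (by positivity)]; push_cast; rfl
  have harg : Complex.I ^ 2 * ‖x‖ ^ 2 / (4 * t) = ((-(‖x‖ ^ 2 / 4 / t) : ℝ) : ℂ) := by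
    push_cast; rw [Complex.I_sq]; ring
  rw [hpow, harg, zero_pow two_ne_zero, zero_mul, zero_div, Complex.exp_zero, Complex.sub_re,
    Complex.re_ofReal_mul, Complex.re_ofReal_mul, Complex.one_re, Complex.exp_ofReal_re]
  ring

lemma integral_one_sub_cos_inner_mul_rpow_mul_exp {t : ℝ} (ht : 0 < t) (x : V) (H : ℝ) :
    ∫ p : V, (1 - cos ⟪p, x⟫) * (t ^ (H + finrank ℝ V / 2 - 1) * exp (-(‖p‖ ^ 2 * t))) =
      π ^ ((finrank ℝ V : ℝ) / 2) * ((1 - exp (-(‖x‖ ^ 2 / 4 / t))) * t ^ (H - 1)) := by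
  simp_rw [mul_left_comm (1 - cos _)]
  rw [integral_const_mul, integral_one_sub_cos_inner_mul_exp_neg_sq_norm_mul ht,
    div_rpow pi_pos.le ht.le]
  have : t ^ (H + finrank ℝ V / 2 - 1) = t ^ (H - 1) * t ^ ((finrank ℝ V : ℝ) / 2) := by
    rw [← rpow_add ht]; ring_nf
  rw [this]
  field_simp

lemma integrable_one_sub_cos_inner_mul_rpow_mul_exp {H : ℝ} (hH0 : 0 < H) (hH1 : H < 1)
    {x : V} (hx : x ≠ 0) :
    Integrable (fun q : ℝ × V =>
        (1 - cos ⟪q.2, x⟫) * (q.1 ^ (H + finrank ℝ V / 2 - 1) * exp (-(‖q.2‖ ^ 2 * q.1))))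
      ((volume.restrict (Ioi 0)).prod volume) := by
  refine (integrable_prod_iff (by fun_prop)).2 ⟨?_, ?_⟩
  · filter_upwards [ae_restrict_mem measurableSet_Ioi] with t (ht : 0 < t)
    simp_rw [mul_left_comm (1 - cos _)]
    exact (integrable_one_sub_cos_inner_mul_exp_neg_sq_norm_mul ht x).const_mul _
  · refine IntegrableOn.congr_fun ((integrableOn_one_sub_exp_neg_div_mul_rpow hH0 hH1
      (by positivity : 0 < ‖x‖ ^ 2 / 4)).const_mul (π ^ ((finrank ℝ V : ℝ) / 2)))
      (fun t (ht : 0 < t) => ?_) measurableSet_Ioi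
    rw [← integral_one_sub_cos_inner_mul_rpow_mul_exp ht]
    refine integral_congr_ae (.of_forall fun p => (norm_of_nonneg ?_).symm)
    exact mul_nonneg (sub_nonneg.2 (cos_le_one _)) (by positivity)

theorem Gamma_mul_integral_one_sub_cos_inner_mul_norm_rpow {H : ℝ} (hH0 : 0 < H) (hH1 : H < 1)
    {x : V} (hx : x ≠ 0) :
    Gamma (H + finrank ℝ V / 2) *
        ∫ p : V, (1 - cos ⟪p, x⟫) * ‖p‖ ^ (-(finrank ℝ V : ℝ) - 2 * H) =
      π ^ ((finrank ℝ V : ℝ) / 2) * ((‖x‖ ^ 2 / 4) ^ H * (Gamma (1 - H) / H)) := by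
  have hs : 0 < H + finrank ℝ V / 2 := by positivity
  have hsubord (p : V) : (1 - cos ⟪p, x⟫) * ‖p‖ ^ (-(finrank ℝ V : ℝ) - 2 * H) *
      Gamma (H + finrank ℝ V / 2) = ∫ t in Ioi (0 : ℝ),
        (1 - cos ⟪p, x⟫) * (t ^ (H + finrank ℝ V / 2 - 1) * exp (-(‖p‖ ^ 2 * t))) := by
    rcases eq_or_ne p 0 with rfl | hp
    · simp
    rw [integral_const_mul, integral_rpow_mul_exp_neg_sq_mul_Ioi hs (norm_pos_iff.2 hp),
      mul_assoc]
    ring_nf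
  rw [mul_comm, ← integral_mul_const, integral_congr_ae (.of_forall hsubord),
    integral_integral_swap
      (by exact (integrable_one_sub_cos_inner_mul_rpow_mul_exp hH0 hH1 hx).swap),
    setIntegral_congr_fun measurableSet_Ioi fun t ht =>
      integral_one_sub_cos_inner_mul_rpow_mul_exp ht x H,
    integral_const_mul, integral_one_sub_exp_neg_div_mul_rpow hH0 hH1 (by positivity)]

end Gaussian

lemma Gamma_add_one_mul_Gamma_one_sub_mul_sin {H : ℝ} (hH0 : 0 < H) (hH1 : H < 1) :
    Gamma (H + 1) * Gamma (1 - H) * sin (π * H) = π * H := by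
  have hsin : sin (π * H) ≠ 0 :=
    (sin_pos_of_pos_of_lt_pi (by positivity) (by nlinarith [pi_pos])).ne'
  rw [Gamma_add_one hH0.ne', mul_assoc H, Gamma_mul_Gamma_one_sub, mul_assoc,
    div_mul_cancel₀ _ hsin, mul_comm]

theorem spectral_integral_eq_general (N : ℕ) (H : ℝ) (hH0 : 0 < H) (hH1 : H < 1)
    (x : EuclideanSpace ℝ (Fin N)) (hx : x ≠ 0) :
    (2 ^ (2 * H - 1) * Real.Gamma (H + N / 2) * Real.Gamma (H + 1) * Real.sin (π * H)
        / π ^ (((N : ℝ) + 2) / 2))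
      * ∫ p : EuclideanSpace ℝ (Fin N),
          (1 - Real.cos (inner ℝ p x : ℝ)) * ‖p‖ ^ (-(N : ℝ) - 2 * H)
    = ‖x‖ ^ (2 * H) / 2 := by
  have hmain := Gamma_mul_integral_one_sub_cos_inner_mul_norm_rpow hH0 hH1 hx
  rw [finrank_euclideanSpace_fin] at hmain
  have hquarter : (‖x‖ ^ 2 / 4) ^ H = ‖x‖ ^ (2 * H) / 2 ^ (2 * H) := by
    rw [div_rpow (by positivity) (by norm_num), show (4 : ℝ) = 2 ^ (2 : ℝ) by norm_num,
      ← rpow_natCast, ← rpow_mul (norm_nonneg x), ← rpow_mul zero_le_two]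
    norm_num
  have htwo : (2 : ℝ) ^ (2 * H - 1) = 2 ^ (2 * H) / 2 := by rw [rpow_sub two_pos, rpow_one]
  have hpi : π ^ (((N : ℝ) + 2) / 2) = π ^ ((N : ℝ) / 2) * π := by
    rw [add_div, div_self two_ne_zero, rpow_add_one pi_pos.ne']
  calc _ = 2 ^ (2 * H - 1) * Gamma (H + 1) * sin (π * H) / π ^ (((N : ℝ) + 2) / 2) *
        (Gamma (H + N / 2) * ∫ p : EuclideanSpace ℝ (Fin N),
          (1 - cos ⟪p, x⟫) * ‖p‖ ^ (-(N : ℝ) - 2 * H)) := by ring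
    _ = ‖x‖ ^ (2 * H) / 2 := by
      rw [hmain, hquarter, htwo, hpi]
      field_simp
      linear_combination (norm := ring_nf) Gamma_add_one_mul_Gamma_one_sub_mul_sin hH0 hH1

/-- For `0 < H < 1`, `N ≥ 2` and `x ≠ 0` in `ℝ^N`,
`c²_{HN} ∫_{ℝ^N} (1 - cos⟨p,x⟩) ‖p‖^{-N-2H} dp = ‖x‖^{2H}/2`, where
`c²_{HN} = 2^{2H-1} Γ(H+N/2) Γ(H+1) sin(πH) / π^{(N+2)/2}`. -/
theorem spectral_integral_eq (N : ℕ) (hN : 2 ≤ N) (H : ℝ) (hH0 : 0 < H) (hH1 : H < 1)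
    (x : EuclideanSpace ℝ (Fin N)) (hx : x ≠ 0) :
    (2 ^ (2 * H - 1) * Real.Gamma (H + N / 2) * Real.Gamma (H + 1) * Real.sin (π * H)
        / π ^ (((N : ℝ) + 2) / 2))
      * ∫ p : EuclideanSpace ℝ (Fin N),
          (1 - Real.cos (inner ℝ p x : ℝ)) * ‖p‖ ^ (-(N : ℝ) - 2 * H)
    = ‖x‖ ^ (2 * H) / 2 :=
  spectral_integral_eq_general N H hH0 hH1 x hx
end
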